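/- arXiv:2510.07630 — 4 statements merged into one kernel-verified Lean document; each statement's English description precedes it below -/
import Mathlib

section
/- For third-order tensors X ∈ R^{m×ℓ×n} and Y ∈ R^{ℓ×q×n}, the Frobenius norm satisfies ‖X * Y‖ ≤ √n · ‖X‖ · ‖Y‖, where * is the t-product. -/
open MeasureTheory ProbabilityTheory
open scoped BigOperators RealInnerProductSpace

noncomputable section

/-- A third-order real tensor of dimensions `m × l × n`. -/
abbrev Tensor (m l n : ℕ) : Type := Fin m → Fin l → Fin n → ℝ

/-- The t-product of third-order tensors. -/
def tmul {m l q n : ℕ} (X : Tensor m l n) (Y : Tensor l q n) : Tensor m q n :=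
  fun i j k => ∑ s : Fin l, ∑ r : Fin n, X i s r * Y s j (k - r)

/-- The tensor transpose: transpose each frontal slice and reverse the order of
slices `1, …, n-1`. -/
def ttransp {m l n : ℕ} (X : Tensor m l n) : Tensor l m n :=
  fun j i k => X i j (-k)

/-- The Frobenius norm of a tensor. -/
def tnorm {m l n : ℕ} (X : Tensor m l n) : ℝ :=
  Real.sqrt (∑ i, ∑ j, ∑ k, (X i j k) ^ 2)

/-- The Frobenius inner product of two tensors. -/
def tinner {m l n : ℕ} (X Y : Tensor m l n) : ℝ :=
  ∑ i, ∑ j, ∑ k, X i j k * Y i j k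

/-- The Hadamard (entrywise) product of two tensors. -/
def had {m l n : ℕ} (C X : Tensor m l n) : Tensor m l n :=
  fun i j k => C i j k * X i j k

/-- The `i`-th row slice of a tensor, viewed as a `1 × l × n` tensor. -/
def rowSlice {m l n : ℕ} (A : Tensor m l n) (i : Fin m) : Tensor 1 l n :=
  fun _ s k => A i s k
lemma sq_tnorm {m l n : ℕ} (X : Tensor m l n) :
    tnorm X ^ 2 = ∑ i, ∑ j, ∑ k, X i j k ^ 2 :=
  Real.sq_sqrt (by positivity)

/-- Cauchy–Schwarz on one entry: as `r` runs over `Fin n`, so does `k - r`, hence the shifted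
tube of `Y` has the same energy as the unshifted one. -/
lemma tmul_sq_le {m l q n : ℕ} (X : Tensor m l n) (Y : Tensor l q n)
    (i : Fin m) (j : Fin q) (k : Fin n) :
    tmul X Y i j k ^ 2 ≤ (∑ s, ∑ r, X i s r ^ 2) * ∑ s, ∑ r, Y s j r ^ 2 := by
  have : NeZero n := ⟨k.pos.ne'⟩
  have hshift (s : Fin l) : ∑ r, Y s j (k - r) ^ 2 = ∑ r, Y s j r ^ 2 :=
    (Equiv.subLeft k).sum_comp (fun r => Y s j r ^ 2)
  simp only [tmul, ← hshift, ← Fintype.sum_prod_type']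
  exact Finset.sum_mul_sq_le_sq_mul_sq _ _ _

lemma sum_sq_tmul_le {m l q n : ℕ} (X : Tensor m l n) (Y : Tensor l q n) :
    ∑ i, ∑ j, ∑ k, tmul X Y i j k ^ 2 ≤ n * tnorm X ^ 2 * tnorm Y ^ 2 :=
  calc ∑ i, ∑ j, ∑ k, tmul X Y i j k ^ 2
      ≤ ∑ i, ∑ j, ∑ _k : Fin n, (∑ s, ∑ r, X i s r ^ 2) * ∑ s, ∑ r, Y s j r ^ 2 := by
        gcongr with i _ j _ k _
        exact tmul_sq_le X Y i j k
    _ = n * tnorm X ^ 2 * tnorm Y ^ 2 := by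
        rw [sq_tnorm, sq_tnorm, Finset.sum_comm (f := fun s j => ∑ r, Y s j r ^ 2), mul_assoc,
          Finset.sum_mul_sum]
        simp only [Finset.sum_const, Finset.card_univ, Fintype.card_fin, nsmul_eq_mul,
          Finset.mul_sum]

/-- sub-multiplicativity of the Frobenius norm under the t-product:
`‖X ∗ Y‖ ≤ √n ‖X‖ ‖Y‖`. -/
theorem tnorm_tprod_le {m l q n : ℕ} (X : Tensor m l n) (Y : Tensor l q n) :
    tnorm (tmul X Y) ≤ Real.sqrt n * tnorm X * tnorm Y := by
  have hX : 0 ≤ tnorm X := Real.sqrt_nonneg _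
  have hY : 0 ≤ tnorm Y := Real.sqrt_nonneg _
  refine Real.sqrt_le_iff.mpr ⟨by positivity, ?_⟩
  rw [mul_pow, mul_pow, Real.sq_sqrt n.cast_nonneg]
  exact sum_sq_tmul_le X Y
end
end

section
/- The constant √n in the sub-multiplicativity bound ‖X * Y‖ ≤ √n‖X‖‖Y‖ for the t-product is sharp: if X ∈ R^{m×ℓ×n} and Y ∈ R^{ℓ×q×n} are the all-ones tensors, then ‖X * Y‖ = ℓn√(mqn) = √n · ‖X‖ · ‖Y‖. -/
open MeasureTheory ProbabilityTheory
open scoped BigOperators RealInnerProductSpace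

noncomputable section

theorem tmul_const {m l q n : ℕ} (a b : ℝ) :
    tmul (fun _ _ _ => a : Tensor m l n) (fun _ _ _ => b : Tensor l q n)
      = fun _ _ _ => (l : ℝ) * n * (a * b) := by
  funext i j k
  simp only [tmul, Finset.sum_const, Finset.card_univ, Fintype.card_fin, nsmul_eq_mul]
  ring

theorem tnorm_const {m l n : ℕ} (c : ℝ) :
    tnorm (fun _ _ _ => c : Tensor m l n) = |c| * Real.sqrt ((m : ℝ) * l * n) := by
  simp only [tnorm, Finset.sum_const, Finset.card_univ, Fintype.card_fin, nsmul_eq_mul]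
  rw [show (m : ℝ) * (l * (n * c ^ 2)) = c ^ 2 * (m * l * n) by ring,
    Real.sqrt_mul (sq_nonneg c), Real.sqrt_sq_eq_abs]

/-- the constant `√n` is sharp: for the all-ones tensors
`X ∈ ℝ^{m×l×n}` and `Y ∈ ℝ^{l×q×n}` one has
`‖X ∗ Y‖ = l n √(m q n) = √n ‖X‖ ‖Y‖`. -/
theorem tnorm_tmul_allOnes_sharp (m l q n : ℕ) :
    tnorm (tmul (fun _ _ _ => (1 : ℝ) : Tensor m l n) (fun _ _ _ => (1 : ℝ) : Tensor l q n))
        = (l : ℝ) * n * Real.sqrt ((m : ℝ) * q * n) ∧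
    tnorm (tmul (fun _ _ _ => (1 : ℝ) : Tensor m l n) (fun _ _ _ => (1 : ℝ) : Tensor l q n))
        = Real.sqrt n * tnorm (fun _ _ _ => (1 : ℝ) : Tensor m l n)
            * tnorm (fun _ _ _ => (1 : ℝ) : Tensor l q n) := by
  have hl : (0 : ℝ) ≤ l := l.cast_nonneg
  have hn : (0 : ℝ) ≤ n := n.cast_nonneg
  have hXY :
      tnorm (tmul (fun _ _ _ => (1 : ℝ) : Tensor m l n) (fun _ _ _ => (1 : ℝ) : Tensor l q n))
        = (l : ℝ) * n * Real.sqrt ((m : ℝ) * q * n) := by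
    rw [tmul_const, tnorm_const, mul_one, mul_one, abs_of_nonneg (mul_nonneg hl hn)]
  refine ⟨hXY, ?_⟩
  rw [hXY, tnorm_const, tnorm_const, abs_one, one_mul, one_mul,
    ← Real.sqrt_mul hn, ← Real.sqrt_mul (by positivity),
    show (n : ℝ) * (m * l * n) * (l * q * n) = (l * n) ^ 2 * (m * q * n) by ring,
    Real.sqrt_mul (sq_nonneg _), Real.sqrt_sq (mul_nonneg hl hn)]
end
end

section
/- Let C be a tensor satisfying E_D[C ∘ (Ã_i* ∗ Ã_i)] = p·C ∘ (A_i* ∗ A_i) and E_D[(1 − C) ∘ (Ã_i* ∗ Ã_i)] = p²·(1 − C) ∘ (A_i* ∗ A_i) for all rows i, and suppose E[Ã] = p·A. Define g(X) = (1/p²)·Ã_i* ∗ (Ã_i ∗ X − p·B_i) − ((1−p)/p²)·C ∘ (Ã_i* ∗ Ã_i) ∗ X, where i is drawn uniformly from {0,...,m−1}. Then E[g(X)] = (1/m)·A* ∗ (A ∗ X − B) = ∇F(X), where F(X) = (1/2m)‖A ∗ X − B‖². -/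
open MeasureTheory ProbabilityTheory
open scoped BigOperators RealInnerProductSpace

noncomputable section

/-!
Since `1 - (1 - p) C = p C + (1 - C)`, the two hypotheses on `C` combine to
`E[(p C + (1 - C)) ∘ (Ã_i* ∗ Ã_i)] = p² A_i* ∗ A_i`, and by associativity of the t-product the
estimator is `p⁻² ((p C + (1 - C)) ∘ (Ã_i* ∗ Ã_i) ∗ X - p Ã_i* ∗ B_i)`, which is linear in
`Ã_i* ∗ Ã_i` and in `Ã_i`. Its entrywise expectation is therefore `A_i* ∗ (A_i ∗ X - B_i)`, and
summing over the rows gives `A* ∗ (A ∗ X - B)`.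

The analytic point is integrability, without which the integrals are junk zeros: every entry of
`Ã` is square-integrable, because a nonzero row of `A` makes the expected diagonal of
`Ã_i* ∗ Ã_i` nonzero, while a zero row of `A` is masked to zero.
-/

section Algebra

variable {m l q r n : ℕ}

def tgram (R : Tensor m l n) : Tensor l l n := tmul (ttransp R) R

theorem tmul_assoc [NeZero n] (X : Tensor m l n) (Y : Tensor l q n) (Z : Tensor q r n) :
    tmul (tmul X Y) Z = tmul X (tmul Y Z) := by
  ext i j k
  have shift : ∀ (s : Fin l) (t : Fin q) (a : Fin n),
      ∑ b : Fin n, X i s a * (Y s t b * Z t j (k - a - b))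
        = ∑ b : Fin n, X i s a * Y s t (b - a) * Z t j (k - b) := fun s t a =>
    Fintype.sum_equiv (Equiv.addLeft a) _ _ fun b => by
      simp only [Equiv.coe_addLeft, add_sub_cancel_left, sub_add_eq_sub_sub, mul_assoc]
  simp only [tmul, Finset.sum_mul, Finset.mul_sum, shift]
  calc _ = ∑ t : Fin q, ∑ s : Fin l, ∑ a : Fin n, ∑ b : Fin n,
        X i s a * Y s t (b - a) * Z t j (k - b) :=
        Finset.sum_congr rfl fun t _ => by
          rw [Finset.sum_comm]; exact Finset.sum_congr rfl fun s _ => Finset.sum_comm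
    _ = _ := by
      rw [Finset.sum_comm]; exact Finset.sum_congr rfl fun s _ => Finset.sum_comm

theorem tmul_sub_left (X Y : Tensor m l n) (Z : Tensor l q n) :
    tmul (X - Y) Z = tmul X Z - tmul Y Z := by
  ext i j k
  simp only [tmul, Pi.sub_apply, sub_mul, Finset.sum_sub_distrib]

theorem tmul_sub_right (X : Tensor m l n) (Y Z : Tensor l q n) :
    tmul X (Y - Z) = tmul X Y - tmul X Z := by
  ext i j k
  simp only [tmul, Pi.sub_apply, mul_sub, Finset.sum_sub_distrib]

theorem tmul_smul_left (c : ℝ) (X : Tensor m l n) (Y : Tensor l q n) :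
    tmul (c • X) Y = c • tmul X Y := by
  ext i j k
  simp only [tmul, Pi.smul_apply, smul_eq_mul, Finset.mul_sum, mul_assoc]

theorem tmul_smul_right (c : ℝ) (X : Tensor m l n) (Y : Tensor l q n) :
    tmul X (c • Y) = c • tmul X Y := by
  ext i j k
  simp only [tmul, Pi.smul_apply, smul_eq_mul, Finset.mul_sum, mul_left_comm]

theorem ttransp_smul (c : ℝ) (X : Tensor m l n) : ttransp (c • X) = c • ttransp X := rfl

theorem tmul_ttransp_eq_sum_rowSlice (A : Tensor m l n) (Y : Tensor m q n) :
    tmul (ttransp A) Y = ∑ i, tmul (ttransp (rowSlice A i)) (rowSlice Y i) := by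
  ext x y k
  simp only [tmul, ttransp, rowSlice, Finset.sum_apply, Fin.sum_univ_one]

theorem tgram_apply_self_zero [NeZero n] (R : Tensor m l n) (x : Fin l) :
    tgram R x x 0 = ∑ i, ∑ k, R i x k ^ 2 := by
  unfold tgram
  refine Finset.sum_congr rfl fun i _ => ?_
  refine Fintype.sum_equiv (Equiv.neg _) _ _ fun k => ?_
  simp only [ttransp, Equiv.neg_apply, zero_sub, sq]

theorem had_smul_add_one_sub (p : ℝ) (C G : Tensor m l n) :
    had (p • C + (1 - C)) G = G - (1 - p) • had C G := by
  ext i j k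
  simp only [had, Pi.add_apply, Pi.sub_apply, Pi.smul_apply, Pi.one_apply, smul_eq_mul]
  ring

end Algebra

section Expectation

variable {Ω : Type*} [MeasurableSpace Ω] {μ : Measure Ω} {m l q n : ℕ}

def texpect (μ : Measure Ω) (T : Ω → Tensor m l n) : Tensor m l n :=
  fun i j k => ∫ ω, T ω i j k ∂μ

theorem integrable_tensor_iff {T : Ω → Tensor m l n} :
    Integrable T μ ↔ ∀ i j k, Integrable (fun ω => T ω i j k) μ := by
  simp only [integrable_pi_iff]

theorem memLp_tensor_iff {T : Ω → Tensor m l n} {p : ENNReal} :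
    MemLp T p μ ↔ ∀ i j k, MemLp (fun ω => T ω i j k) p μ := by
  simp only [memLp_pi_iff]

theorem texpect_sub {S T : Ω → Tensor m l n} (hS : Integrable S μ) (hT : Integrable T μ) :
    texpect μ (fun ω => S ω - T ω) = texpect μ S - texpect μ T := by
  ext i j k
  exact integral_sub (integrable_tensor_iff.1 hS i j k) (integrable_tensor_iff.1 hT i j k)

theorem texpect_smul (c : ℝ) (T : Ω → Tensor m l n) :
    texpect μ (fun ω => c • T ω) = c • texpect μ T := by
  ext i j k
  exact integral_const_mul c _

theorem texpect_had (C : Tensor m l n) (T : Ω → Tensor m l n) :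
    texpect μ (fun ω => had C (T ω)) = had C (texpect μ T) := by
  ext i j k
  exact integral_const_mul _ _

theorem texpect_ttransp (T : Ω → Tensor m l n) :
    texpect μ (fun ω => ttransp (T ω)) = ttransp (texpect μ T) := rfl

theorem MeasureTheory.Integrable.tmul_const {T : Ω → Tensor m l n} (hT : Integrable T μ)
    (Y : Tensor l q n) :
    Integrable (fun ω => tmul (T ω) Y) μ :=
  integrable_tensor_iff.2 fun i _ _ => integrable_finsetSum _ fun s _ =>
    integrable_finsetSum _ fun r _ => (integrable_tensor_iff.1 hT i s r).mul_const _

theorem texpect_tmul_const {T : Ω → Tensor m l n} (hT : Integrable T μ) (Y : Tensor l q n) :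
    texpect μ (fun ω => tmul (T ω) Y) = tmul (texpect μ T) Y := by
  ext i j k
  simp only [texpect, tmul]
  rw [integral_finsetSum _ fun s _ => integrable_finsetSum _ fun r _ =>
    (integrable_tensor_iff.1 hT i s r).mul_const _]
  refine Finset.sum_congr rfl fun s _ => ?_
  rw [integral_finsetSum _ fun r _ => (integrable_tensor_iff.1 hT i s r).mul_const _]
  exact Finset.sum_congr rfl fun r _ => integral_mul_const _ _

theorem MeasureTheory.Integrable.ttransp {T : Ω → Tensor m l n} (hT : Integrable T μ) :
    Integrable (fun ω => ttransp (T ω)) μ :=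
  integrable_tensor_iff.2 fun j i k => integrable_tensor_iff.1 hT i j (-k)

theorem MeasureTheory.Integrable.had {T : Ω → Tensor m l n} (hT : Integrable T μ)
    (C : Tensor m l n) :
    Integrable (fun ω => had C (T ω)) μ :=
  integrable_tensor_iff.2 fun i j k => (integrable_tensor_iff.1 hT i j k).const_mul _

theorem MeasureTheory.MemLp.integrable_tgram {R : Ω → Tensor m l n} (hR : MemLp R 2 μ) :
    Integrable (fun ω => tgram (R ω)) μ :=
  integrable_tensor_iff.2 fun x y k => integrable_finsetSum Finset.univ fun i _ =>
    integrable_finsetSum _ fun r _ =>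
      (memLp_tensor_iff.1 hR i x (-r)).integrable_mul (memLp_tensor_iff.1 hR i y (k - r))

end Expectation

section Estimator

variable {Ω : Type*} [MeasurableSpace Ω] {μ : Measure Ω} {m l q n : ℕ} {p : ℝ}

theorem had_smul_add_one_sub_texpect {G : Ω → Tensor m l n} {M C : Tensor m l n}
    (hC1 : texpect μ (fun ω => had C (G ω)) = p • had C M)
    (hC2 : texpect μ (fun ω => had (1 - C) (G ω)) = p ^ 2 • had (1 - C) M) :
    had (p • C + (1 - C)) (texpect μ G) = p ^ 2 • M := by
  rw [texpect_had] at hC1 hC2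
  ext i j k
  have h1 := congr_fun₃ hC1 i j k
  have h2 := congr_fun₃ hC2 i j k
  simp only [had, Pi.add_apply, Pi.sub_apply, Pi.smul_apply, Pi.one_apply, smul_eq_mul] at h1 h2 ⊢
  linear_combination p * h1 + h2

theorem texpect_gradient_estimator [NeZero n] (hp : p ≠ 0) {R : Ω → Tensor m l n}
    {a : Tensor m l n} (b : Tensor m q n) (X : Tensor l q n) (C : Tensor l l n)
    (hR : Integrable R μ) (hG : Integrable (fun ω => tgram (R ω)) μ)
    (hmean : texpect μ R = p • a)
    (hgram : had (p • C + (1 - C)) (texpect μ fun ω => tgram (R ω)) = p ^ 2 • tgram a) :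
    texpect μ (fun ω => (1 / p ^ 2) • tmul (ttransp (R ω)) (tmul (R ω) X - p • b)
        - ((1 - p) / p ^ 2) • tmul (had C (tgram (R ω))) X)
      = tmul (ttransp a) (tmul a X - b) := by
  have hpoint : ∀ ω, (1 / p ^ 2) • tmul (ttransp (R ω)) (tmul (R ω) X - p • b)
        - ((1 - p) / p ^ 2) • tmul (had C (tgram (R ω))) X
      = (1 / p ^ 2) • (tmul (had (p • C + (1 - C)) (tgram (R ω))) X
        - p • tmul (ttransp (R ω)) b) := fun ω => by
    rw [had_smul_add_one_sub, tmul_sub_left, tmul_smul_left, tmul_sub_right, tmul_smul_right,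
      tgram, tmul_assoc]
    module
  have hRb : Integrable (fun ω => p • tmul (ttransp (R ω)) b) μ :=
    (hR.ttransp.tmul_const b).smul p
  simp only [hpoint]
  rw [texpect_smul, texpect_sub ((hG.had _).tmul_const X) hRb,
    texpect_smul, texpect_tmul_const (hG.had _), texpect_tmul_const hR.ttransp, texpect_had,
    texpect_ttransp, hgram, hmean, ttransp_smul, tmul_smul_left, tmul_smul_left, smul_smul,
    ← sq, ← smul_sub, smul_smul, one_div_mul_cancel (pow_ne_zero 2 hp), one_smul,
    tmul_sub_right, tgram, tmul_assoc]

theorem integrable_mul_const_of_integral_eq (hp : p ≠ 0) {f : Ω → ℝ} {a : ℝ}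
    (h : ∫ ω, f ω * a ∂μ = p * a) : Integrable (fun ω => f ω * a) μ := by
  rcases eq_or_ne a 0 with rfl | ha
  · simp only [mul_zero]
    exact integrable_zero Ω ℝ μ
  · exact .of_integral_ne_zero (by rw [h]; exact mul_ne_zero hp ha)

theorem integrable_had_of_texpect (hp : p ≠ 0) {M : Ω → Tensor m l n} {a : Tensor m l n}
    (h : texpect μ (fun ω => had (M ω) a) = p • a) : Integrable (fun ω => had (M ω) a) μ :=
  integrable_tensor_iff.2 fun i j k =>
    integrable_mul_const_of_integral_eq hp (congr_fun₃ h i j k)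

theorem integrable_sum_sq_had [NeZero n] (hp : p ≠ 0) {M : Ω → Tensor m l n}
    {a : Tensor m l n} {C : Tensor l l n}
    (hgram : had (p • C + (1 - C)) (texpect μ fun ω => tgram (had (M ω) a))
      = p ^ 2 • tgram a) (x : Fin l) :
    Integrable (fun ω => ∑ i, ∑ k, had (M ω) a i x k ^ 2) μ := by
  have hdiag : (p • C + (1 - C)) x x 0 * ∫ ω, tgram (had (M ω) a) x x 0 ∂μ
      = p ^ 2 * tgram a x x 0 := congr_fun₃ hgram x x 0
  simp only [tgram_apply_self_zero] at hdiag
  by_cases h0 : ∫ ω, ∑ i, ∑ k, had (M ω) a i x k ^ 2 ∂μ = 0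
  · have hrow : ∀ i k, a i x k = 0 := by
      rw [h0, mul_zero, zero_eq_mul, or_iff_right (pow_ne_zero 2 hp),
        Finset.sum_eq_zero_iff_of_nonneg fun i _ => Finset.sum_nonneg fun k _ => sq_nonneg _]
        at hdiag
      intro i k
      exact pow_eq_zero_iff two_ne_zero |>.1 <|
        (Finset.sum_eq_zero_iff_of_nonneg fun k _ => sq_nonneg _).1
          (hdiag i (Finset.mem_univ i)) k (Finset.mem_univ k)
    simp only [had, hrow, mul_zero, sq, Finset.sum_const_zero]
    exact integrable_zero Ω ℝ μ
  · exact .of_integral_ne_zero h0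

theorem memLp_had_of_had_texpect_gram [NeZero n] (hp : p ≠ 0) {M : Ω → Tensor m l n}
    {a : Tensor m l n} {C : Tensor l l n} (hint : Integrable (fun ω => had (M ω) a) μ)
    (hgram : had (p • C + (1 - C)) (texpect μ fun ω => tgram (had (M ω) a))
      = p ^ 2 • tgram a) :
    MemLp (fun ω => had (M ω) a) 2 μ := by
  refine memLp_tensor_iff.2 fun i x k => ?_
  have hmeas := (integrable_tensor_iff.1 hint i x k).aestronglyMeasurable
  refine (memLp_two_iff_integrable_sq hmeas).2 <|
    (integrable_sum_sq_had hp hgram x).mono' (hmeas.pow 2) (ae_of_all _ fun ω => ?_)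
  rw [Real.norm_eq_abs, abs_of_nonneg (sq_nonneg _)]
  exact (Finset.single_le_sum (fun k _ => sq_nonneg (had (M ω) a i x k)) (Finset.mem_univ k)).trans
    (Finset.single_le_sum (fun i _ => Finset.sum_nonneg fun k _ => sq_nonneg (had (M ω) a i x k))
      (Finset.mem_univ i))

theorem texpect_masked_gradient_estimator [NeZero n] (hp : p ≠ 0) (M : Ω → Tensor m l n)
    (a : Tensor m l n) (b : Tensor m q n) (X : Tensor l q n) (C : Tensor l l n)
    (hC1 : texpect μ (fun ω => had C (tgram (had (M ω) a))) = p • had C (tgram a))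
    (hC2 : texpect μ (fun ω => had (1 - C) (tgram (had (M ω) a))) = p ^ 2 • had (1 - C) (tgram a))
    (hmean : texpect μ (fun ω => had (M ω) a) = p • a) :
    texpect μ (fun ω =>
        (1 / p ^ 2) • tmul (ttransp (had (M ω) a)) (tmul (had (M ω) a) X - p • b)
        - ((1 - p) / p ^ 2) • tmul (had C (tgram (had (M ω) a))) X)
      = tmul (ttransp a) (tmul a X - b) :=
  have hgram := had_smul_add_one_sub_texpect hC1 hC2
  have hint := integrable_had_of_texpect hp hmean
  texpect_gradient_estimator hp b X C hint
    (memLp_had_of_had_texpect_gram hp hint hgram).integrable_tgram hmean hgram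

end Estimator

theorem unbiased_gradient_estimate_general {m l q n : ℕ} {Ω : Type*} [MeasurableSpace Ω]
    (μ : Measure Ω) (p : ℝ) (hp : p ≠ 0)
    (A : Tensor m l n) (B : Tensor m q n) (X : Tensor l q n)
    (D : Ω → Tensor m l n) (C : Tensor l l n)
    (hC1 : ∀ (i : Fin m) (x y : Fin l) (r : Fin n),
      ∫ ω, had C (tmul (ttransp (rowSlice (had (D ω) A) i)) (rowSlice (had (D ω) A) i)) x y r ∂μ
        = p * had C (tmul (ttransp (rowSlice A i)) (rowSlice A i)) x y r)
    (hC2 : ∀ (i : Fin m) (x y : Fin l) (r : Fin n),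
      ∫ ω, (1 - C x y r)
          * tmul (ttransp (rowSlice (had (D ω) A) i)) (rowSlice (had (D ω) A) i) x y r ∂μ
        = p ^ 2 * ((1 - C x y r) * tmul (ttransp (rowSlice A i)) (rowSlice A i) x y r))
    (hEA : ∀ (i : Fin m) (j : Fin l) (k : Fin n),
      ∫ ω, had (D ω) A i j k ∂μ = p * A i j k) :
    ∀ (x : Fin l) (y : Fin q) (k : Fin n),
      (1 / (m : ℝ)) * ∑ i : Fin m,
        ∫ ω,
          ((1 / p ^ 2) * tmul (ttransp (rowSlice (had (D ω) A) i))
              (tmul (rowSlice (had (D ω) A) i) X - p • rowSlice B i) x y k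
            - ((1 - p) / p ^ 2)
              * tmul (had C (tmul (ttransp (rowSlice (had (D ω) A) i))
                  (rowSlice (had (D ω) A) i))) X x y k) ∂μ
      = (1 / (m : ℝ)) * tmul (ttransp A) (tmul A X - B) x y k := by
  intro x y k
  have : NeZero n := NeZero.of_pos k.pos
  rw [tmul_ttransp_eq_sum_rowSlice, Finset.sum_apply, Finset.sum_apply, Finset.sum_apply]
  refine congrArg _ (Finset.sum_congr rfl fun i _ => ?_)
  exact congr_fun₃ (texpect_masked_gradient_estimator hp (fun ω => rowSlice (D ω) i)
    (rowSlice A i) (rowSlice B i) X C (funext₃ (hC1 i)) (funext₃ (hC2 i))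
    (funext₃ fun _ => hEA i)) x y k

/-- if `C` satisfies (for every row `i`)
`E_D[C ∘ (Ã_i* ∗ Ã_i)] = p C ∘ (A_i* ∗ A_i)` and
`E_D[(1 − C) ∘ (Ã_i* ∗ Ã_i)] = p² (1 − C) ∘ (A_i* ∗ A_i)`, and `E[Ã] = p A`, then
the stochastic direction
`g(X) = (1/p²) Ã_i* ∗ (Ã_i ∗ X − p B_i) − ((1−p)/p²) C ∘ (Ã_i* ∗ Ã_i) ∗ X`, with the
row index `i` uniform on `{0,…,m−1}`, is an unbiased estimator of the gradient:
`E[g(X)] = (1/m) A* ∗ (A ∗ X − B) = ∇F(X)`. -/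
theorem unbiased_gradient_estimate {m l q n : ℕ} {Ω : Type*} [MeasurableSpace Ω]
    (μ : Measure Ω) [IsProbabilityMeasure μ] (p : ℝ) (hp : p ≠ 0)
    (A : Tensor m l n) (B : Tensor m q n) (X : Tensor l q n)
    (D : Ω → Tensor m l n) (C : Tensor l l n)
    (hC1 : ∀ (i : Fin m) (x y : Fin l) (r : Fin n),
      ∫ ω, had C (tmul (ttransp (rowSlice (had (D ω) A) i)) (rowSlice (had (D ω) A) i)) x y r ∂μ
        = p * had C (tmul (ttransp (rowSlice A i)) (rowSlice A i)) x y r)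
    (hC2 : ∀ (i : Fin m) (x y : Fin l) (r : Fin n),
      ∫ ω, (1 - C x y r)
          * tmul (ttransp (rowSlice (had (D ω) A) i)) (rowSlice (had (D ω) A) i) x y r ∂μ
        = p ^ 2 * ((1 - C x y r) * tmul (ttransp (rowSlice A i)) (rowSlice A i) x y r))
    (hEA : ∀ (i : Fin m) (j : Fin l) (k : Fin n),
      ∫ ω, had (D ω) A i j k ∂μ = p * A i j k) :
    ∀ (x : Fin l) (y : Fin q) (k : Fin n),
      (1 / (m : ℝ)) * ∑ i : Fin m,
        ∫ ω,
          ((1 / p ^ 2) * tmul (ttransp (rowSlice (had (D ω) A) i))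
              (tmul (rowSlice (had (D ω) A) i) X - p • rowSlice B i) x y k
            - ((1 - p) / p ^ 2)
              * tmul (had C (tmul (ttransp (rowSlice (had (D ω) A) i))
                  (rowSlice (had (D ω) A) i))) X x y k) ∂μ
      = (1 / (m : ℝ)) * tmul (ttransp A) (tmul A X - B) x y k :=
  unbiased_gradient_estimate_general μ p hp A B X D C hC1 hC2 hEA
end
end

section
/- Let F(X) = (1/2m)‖A ∗ X − B‖² for a tensor A ∈ R^{m×ℓ×n} with m > ℓ, and let σ_min be the smallest singular value of bdiag(Â), where Â is obtained by applying the discrete Fourier transform along the tubes of A. Then F is (σ_min²/m)-strongly convex. -/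
open MeasureTheory ProbabilityTheory
open scoped BigOperators RealInnerProductSpace

noncomputable section

/-- The tensor `Â` obtained by applying the `n`-point DFT along the tubes of `A`. -/
def dftTubes {m l n : ℕ} (A : Tensor m l n) : Fin m → Fin l → Fin n → ℂ :=
  fun i j k => ∑ r : Fin n,
    (A i j r : ℂ) * Complex.exp (-(2 * (Real.pi : ℂ) * Complex.I * (k : ℕ) * (r : ℕ)) / n)

/-- The block diagonal matrix `bdiag(Â)` whose diagonal blocks are the frontal
slices of `Â`. -/
def bdiagDFT {m l n : ℕ} (A : Tensor m l n) :
    Matrix (Fin m × Fin n) (Fin l × Fin n) ℂ :=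
  fun ik jk => if ik.2 = jk.2 then dftTubes A ik.1 jk.1 ik.2 else 0

/-! The DFT along tubes turns the t-product into slicewise matrix products
(convolution theorem) and multiplies squared Frobenius norms by `n` (Parseval), so the
singular-value bound on `bdiag(Â)` gives `σmin² ‖Z‖² ≤ ‖A ∗ Z‖²`. Since `X ↦ A ∗ X − B` is
affine, `‖A ∗ (tX + (1-t)Y) − B‖²` is the convex combination of the endpoint values minus
`t(1-t) ‖A ∗ (X − Y)‖²`, which yields the strong-convexity inequality. -/

lemma AddChar.IsPrimitive.compRingEquiv {R S M : Type*} [CommRing R] [CommRing S] [CommMonoid M]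
    {ψ : AddChar S M} (hψ : ψ.IsPrimitive) (e : R ≃+* S) :
    (ψ.compAddMonoidHom e.toAddMonoidHom).IsPrimitive := by
  intro a ha h
  refine hψ (e.map_ne_zero_iff.mpr ha) (DFunLike.ext _ _ fun x => ?_)
  simpa using DFunLike.congr_fun h (e.symm x)

section DFT

variable {R : Type*} [CommRing R] [Fintype R]

def dft (ψ : AddChar R ℂ) : (R → ℂ) →ₗ[ℂ] R → ℂ :=
  Matrix.mulVecLin (Matrix.of fun k r => ψ (-(k * r)))

lemma dft_apply (ψ : AddChar R ℂ) (f : R → ℂ) (k : R) :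
    dft ψ f k = ∑ r, ψ (-(k * r)) * f r := rfl

lemma dft_conv (ψ : AddChar R ℂ) (f g : R → ℂ) (k : R) :
    dft ψ (fun x => ∑ r, f r * g (x - r)) k = dft ψ f k * dft ψ g k := by
  rw [dft_apply, dft_apply, dft_apply, Finset.sum_mul_sum]
  simp_rw [Finset.mul_sum]
  rw [Finset.sum_comm]
  refine Finset.sum_congr rfl fun r _ => ?_
  rw [← Equiv.sum_comp (Equiv.addLeft r)]
  refine Finset.sum_congr rfl fun u _ => ?_
  simp only [Equiv.coe_addLeft, add_sub_cancel_left, mul_add, neg_add, AddChar.map_add_eq_mul]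
  ring

lemma sum_norm_sq_dft {ψ : AddChar R ℂ} (hψ : ψ.IsPrimitive) (f : R → ℂ) :
    ∑ k, ‖dft ψ f k‖ ^ 2 = Fintype.card R * ∑ r, ‖f r‖ ^ 2 := by
  classical
  have orth : ∀ r r' : R, ∑ k, ψ (-(k * r)) * f r * (ψ (k * r') * (starRingEnd ℂ) (f r'))
      = if r = r' then (Fintype.card R : ℂ) * (f r * (starRingEnd ℂ) (f r)) else 0 := by
    intro r r'
    have hψkr : ∀ k : R, ψ (-(k * r)) * ψ (k * r') = ψ (k * (r' - r)) := fun k => by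
      rw [← AddChar.map_add_eq_mul]; ring_nf
    calc _ = f r * (starRingEnd ℂ) (f r') * ∑ k, ψ (k * (r' - r)) := by
          rw [Finset.mul_sum]
          refine Finset.sum_congr rfl fun k _ => ?_
          rw [← hψkr]; ring
      _ = _ := by
          rw [AddChar.sum_mulShift _ hψ, sub_eq_zero, eq_comm (a := r')]
          split_ifs with h
          · subst h; ring
          · simp
  apply Complex.ofReal_injective
  push_cast
  simp_rw [← Complex.mul_conj', dft_apply, map_sum, map_mul, ← AddChar.map_neg_eq_conj, neg_neg,
    Finset.sum_mul_sum]
  rw [Finset.sum_comm, Finset.mul_sum]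
  refine Finset.sum_congr rfl fun r _ => ?_
  rw [Finset.sum_comm]
  simp_rw [orth, Finset.sum_ite_eq, Finset.mem_univ, if_true]

end DFT

section FinDFT

open Fin.CommRing

variable {n : ℕ} [NeZero n]

def finStdAddChar (n : ℕ) [NeZero n] : AddChar (Fin n) ℂ :=
  ZMod.stdAddChar.compAddMonoidHom (ZMod.finEquiv n).toAddMonoidHom

lemma isPrimitive_finStdAddChar : (finStdAddChar n).IsPrimitive :=
  (ZMod.isPrimitive_stdAddChar n).compRingEquiv _

lemma finStdAddChar_neg_mul (k r : Fin n) :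
    finStdAddChar n (-(k * r)) =
      Complex.exp (-(2 * (Real.pi : ℂ) * Complex.I * (k : ℕ) * (r : ℕ)) / n) := by
  have hcast : ∀ x : Fin n, ZMod.finEquiv n x = ((x : ℕ) : ZMod n) := fun x => by
    rw [← map_natCast (ZMod.finEquiv n), Fin.cast_val_eq_self]
  have harg : ZMod.finEquiv n (-(k * r)) = ((-((k : ℕ) * (r : ℕ) : ℤ) : ℤ) : ZMod n) := by
    rw [map_neg, map_mul, hcast, hcast]; push_cast; ring
  change ZMod.stdAddChar (ZMod.finEquiv n (-(k * r))) = _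
  rw [harg, ZMod.stdAddChar_coe]
  push_cast
  ring_nf

lemma dftTubes_eq_dft {m l : ℕ} (A : Tensor m l n) (i : Fin m) (j : Fin l) (k : Fin n) :
    dftTubes A i j k = dft (finStdAddChar n) (fun r => (A i j r : ℂ)) k := by
  rw [dft_apply, dftTubes]
  exact Finset.sum_congr rfl fun r _ => by rw [finStdAddChar_neg_mul, mul_comm]

lemma dftTubes_tmul {m l q : ℕ} (A : Tensor m l n) (Z : Tensor l q n) (i : Fin m) (j : Fin q)
    (k : Fin n) : dftTubes (tmul A Z) i j k = ∑ s, dftTubes A i s k * dftTubes Z s j k := by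
  have htube : (fun r => (tmul A Z i j r : ℂ))
      = ∑ s, fun x => ∑ r, (A i s r : ℂ) * (Z s j (x - r) : ℂ) := by
    ext x; simp [tmul]
  simp only [dftTubes_eq_dft, htube, map_sum, Finset.sum_apply]
  exact Finset.sum_congr rfl fun s _ =>
    dft_conv _ (fun r => (A i s r : ℂ)) (fun r => (Z s j r : ℂ)) k

lemma sum_norm_sq_dftTubes {m l : ℕ} (A : Tensor m l n) (i : Fin m) (j : Fin l) :
    ∑ k, ‖dftTubes A i j k‖ ^ 2 = n * ∑ k, A i j k ^ 2 := by
  simp only [dftTubes_eq_dft, sum_norm_sq_dft isPrimitive_finStdAddChar, Fintype.card_fin,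
    Complex.norm_real, Real.norm_eq_abs, sq_abs]

end FinDFT

section Tensor

variable {m l q n : ℕ}

lemma tnorm_sq (X : Tensor m l n) : tnorm X ^ 2 = ∑ i, ∑ j, ∑ k, X i j k ^ 2 :=
  Real.sq_sqrt (by positivity)

lemma tnorm_sq_add_smul_one_sub (U W : Tensor m l n) (t : ℝ) :
    tnorm (t • U + (1 - t) • W) ^ 2
      = t * tnorm U ^ 2 + (1 - t) * tnorm W ^ 2 - t * (1 - t) * tnorm (U - W) ^ 2 := by
  simp only [tnorm_sq, Finset.mul_sum, ← Finset.sum_add_distrib, ← Finset.sum_sub_distrib]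
  refine Finset.sum_congr rfl fun i _ => Finset.sum_congr rfl fun j _ =>
    Finset.sum_congr rfl fun k _ => ?_
  simp only [Pi.add_apply, Pi.smul_apply, Pi.sub_apply, smul_eq_mul]
  ring

lemma tmul_add (A : Tensor m l n) (X Y : Tensor l q n) :
    tmul A (X + Y) = tmul A X + tmul A Y := by
  ext i j k
  simp only [tmul, Pi.add_apply, mul_add, Finset.sum_add_distrib]

lemma tmul_smul (A : Tensor m l n) (c : ℝ) (X : Tensor l q n) :
    tmul A (c • X) = c • tmul A X := by
  ext i j k
  simp only [tmul, Pi.smul_apply, smul_eq_mul, Finset.mul_sum]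
  exact Finset.sum_congr rfl fun s _ => Finset.sum_congr rfl fun r _ => by ring

lemma tmul_sub (A : Tensor m l n) (X Y : Tensor l q n) :
    tmul A (X - Y) = tmul A X - tmul A Y := by
  ext i j k
  simp only [tmul, Pi.sub_apply, mul_sub, Finset.sum_sub_distrib]

variable [NeZero n]

lemma bdiagDFT_mulVec_dftTubes (A : Tensor m l n) (Z : Tensor l q n) (j : Fin q) (i : Fin m)
    (k : Fin n) :
    Matrix.mulVec (bdiagDFT A) (fun p => dftTubes Z p.1 j p.2) (i, k)
      = dftTubes (tmul A Z) i j k := by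
  simp [Matrix.mulVec, dotProduct, bdiagDFT, Fintype.sum_prod_type, dftTubes_tmul]

lemma sq_mul_tnorm_sq_le_tnorm_tmul_sq (A : Tensor m l n) (σmin : ℝ)
    (hσ : ∀ v : Fin l × Fin n → ℂ,
      σmin ^ 2 * ∑ x : Fin l × Fin n, ‖v x‖ ^ 2
        ≤ ∑ y : Fin m × Fin n, ‖Matrix.mulVec (bdiagDFT A) v y‖ ^ 2)
    (Z : Tensor l q n) :
    σmin ^ 2 * tnorm Z ^ 2 ≤ tnorm (tmul A Z) ^ 2 := by
  have hn : (0 : ℝ) < n := Nat.cast_pos.mpr (NeZero.pos n)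
  have hcol : ∀ j, σmin ^ 2 * ∑ s, ∑ r, Z s j r ^ 2 ≤ ∑ i, ∑ k, tmul A Z i j k ^ 2 := by
    intro j
    have h := hσ fun p => dftTubes Z p.1 j p.2
    simp only [Fintype.sum_prod_type, bdiagDFT_mulVec_dftTubes, sum_norm_sq_dftTubes,
      ← Finset.mul_sum, mul_left_comm (σmin ^ 2)] at h
    exact le_of_mul_le_mul_left h hn
  calc σmin ^ 2 * tnorm Z ^ 2 = ∑ j, σmin ^ 2 * ∑ s, ∑ r, Z s j r ^ 2 := by
        rw [tnorm_sq, Finset.sum_comm, Finset.mul_sum]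
    _ ≤ ∑ j, ∑ i, ∑ k, tmul A Z i j k ^ 2 := Finset.sum_le_sum fun j _ => hcol j
    _ = tnorm (tmul A Z) ^ 2 := by rw [tnorm_sq, Finset.sum_comm]

end Tensor

theorem objective_strongly_convex_general {m l q n : ℕ} [NeZero n]
    (A : Tensor m l n) (B : Tensor m q n) (σmin : ℝ)
    (hσ : ∀ v : Fin l × Fin n → ℂ,
      σmin ^ 2 * ∑ x : Fin l × Fin n, ‖v x‖ ^ 2
        ≤ ∑ y : Fin m × Fin n, ‖Matrix.mulVec (bdiagDFT A) v y‖ ^ 2) :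
    ∀ (X Y : Tensor l q n) (t : ℝ), 0 ≤ t → t ≤ 1 →
      (1 / (2 * (m : ℝ))) * tnorm (tmul A (t • X + (1 - t) • Y) - B) ^ 2
        ≤ t * ((1 / (2 * (m : ℝ))) * tnorm (tmul A X - B) ^ 2)
          + (1 - t) * ((1 / (2 * (m : ℝ))) * tnorm (tmul A Y - B) ^ 2)
          - σmin ^ 2 / m / 2 * (t * (1 - t)) * tnorm (X - Y) ^ 2 := by
  intro X Y t ht0 ht1
  have hcomb : tmul A (t • X + (1 - t) • Y) - B
      = t • (tmul A X - B) + (1 - t) • (tmul A Y - B) := by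
    rw [tmul_add, tmul_smul, tmul_smul]; module
  have hdiff : (tmul A X - B) - (tmul A Y - B) = tmul A (X - Y) := by
    rw [tmul_sub]; abel
  have hweight : 0 ≤ 1 / (2 * (m : ℝ)) * (t * (1 - t)) :=
    mul_nonneg (by positivity) (mul_nonneg ht0 (sub_nonneg.mpr ht1))
  have hbound := mul_le_mul_of_nonneg_left
    (sq_mul_tnorm_sq_le_tnorm_tmul_sq A σmin hσ (X - Y)) hweight
  rw [hcomb, tnorm_sq_add_smul_one_sub, hdiff]
  linear_combination hbound

/-- for `F(X) = (1/2m)‖A ∗ X − B‖²` with `A ∈ ℝ^{m×l×n}` tall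
(`m > l`), if `σmin` is the smallest singular value of `bdiag(Â)` (formalized:
`σmin² ‖v‖² ≤ ‖bdiag(Â) v‖²` for all `v`), then `F` is `σmin²/m`-strongly convex. -/
theorem objective_strongly_convex {m l q n : ℕ} [NeZero n] (hml : l < m)
    (A : Tensor m l n) (B : Tensor m q n) (σmin : ℝ)
    (hσ : ∀ v : Fin l × Fin n → ℂ,
      σmin ^ 2 * ∑ x : Fin l × Fin n, ‖v x‖ ^ 2
        ≤ ∑ y : Fin m × Fin n, ‖Matrix.mulVec (bdiagDFT A) v y‖ ^ 2) :
    ∀ (X Y : Tensor l q n) (t : ℝ), 0 ≤ t → t ≤ 1 →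
      (1 / (2 * (m : ℝ))) * tnorm (tmul A (t • X + (1 - t) • Y) - B) ^ 2
        ≤ t * ((1 / (2 * (m : ℝ))) * tnorm (tmul A X - B) ^ 2)
          + (1 - t) * ((1 / (2 * (m : ℝ))) * tnorm (tmul A Y - B) ^ 2)
          - σmin ^ 2 / m / 2 * (t * (1 - t)) * tnorm (X - Y) ^ 2 :=
  objective_strongly_convex_general A B σmin hσ
end
end
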